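/- Explicit projection onto the half-cylinder used in the augmented Lagrangian method: let R ≥ 0 and let C_R = {x ∈ E : x_n ≥ 0 and ‖x_t‖ ≤ R}. For τ ∈ E, the point p = (max 0 τ_n) • n + (min 1 (R / ‖τ_t‖)) • τ_t is the orthogonal projection of τ onto C_R; that is, p ∈ C_R and for every s ∈ C_R one has ‖τ - p‖ ≤ ‖τ - s‖. (Here if τ_t = 0 the tangential term is 0, and if ‖τ_t‖ ≤ R the tangential component of p is τ_t, while if ‖τ_t‖ > R it is (R/‖τ_t‖) • τ_t.) -/

import Mathlib

/-!
Since `n` is a unit vector, `‖x - s‖² = (x_n - s_n)² + ‖x_t - s_t‖²`, and the half-cylinder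
is the product of the ray `{s_n ≥ 0}` and the ball `{‖s_t‖ ≤ R}` in these coordinates.
The distance therefore splits into two independent problems: clamping `τ_n` at `0` is the
nearest point of the ray, and radially shrinking `τ_t` onto the ball is its nearest point.
-/

open scoped InnerProductSpace

noncomputable section

/-- The ambient space `E = ℝ³`. -/
abbrev E := EuclideanSpace ℝ (Fin 3)

/-- Normal component of `x` relative to the unit normal `n`. -/
def xn (n x : E) : ℝ := ⟪x, n⟫_ℝ

/-- Tangential component of `x` relative to the unit normal `n`. -/
def xt (n x : E) : E := x - (⟪x, n⟫_ℝ) • n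

/-- The Coulomb cone with friction coefficient `μ`. -/
def Kcone (n : E) (μ : ℝ) : Set E := {r | ‖xt n r‖ ≤ μ * xn n r}

lemma sq_sub_max_zero_le {t y : ℝ} (hy : 0 ≤ y) : (t - max 0 t) ^ 2 ≤ (t - y) ^ 2 := by
  rcases le_total 0 t with ht | ht
  · simp [max_eq_right ht, sq_nonneg]
  · rw [max_eq_left ht, sub_zero]
    nlinarith

section BallRetraction

variable {F : Type*} [NormedAddCommGroup F] {R : ℝ}

lemma min_one_div_norm_mul_norm (hR : 0 ≤ R) (u : F) :
    min 1 (R / ‖u‖) * ‖u‖ = min ‖u‖ R := by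
  rcases eq_or_ne u 0 with rfl | hu
  · simp [hR]
  · rw [min_mul_of_nonneg _ _ (norm_nonneg u), one_mul,
      div_mul_cancel₀ R (norm_ne_zero_iff.mpr hu)]

variable [NormedSpace ℝ F]

lemma norm_min_one_div_norm_smul (hR : 0 ≤ R) (u : F) :
    ‖min 1 (R / ‖u‖) • u‖ = min ‖u‖ R := by
  rw [norm_smul, Real.norm_of_nonneg (by positivity), min_one_div_norm_mul_norm hR]

lemma norm_min_one_div_norm_smul_le (hR : 0 ≤ R) (u : F) : ‖min 1 (R / ‖u‖) • u‖ ≤ R :=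
  (norm_min_one_div_norm_smul hR u).trans_le (min_le_right _ _)

lemma norm_sub_min_one_div_norm_smul_le (hR : 0 ≤ R) (u : F) {s : F} (hs : ‖s‖ ≤ R) :
    ‖u - min 1 (R / ‖u‖) • u‖ ≤ ‖u - s‖ := by
  set b := min 1 (R / ‖u‖) with hb_def
  have hb : b ≤ 1 := min_le_left _ _
  calc ‖u - b • u‖ = (1 - b) * ‖u‖ := by
        rw [← norm_smul_of_nonneg (sub_nonneg.mpr hb), sub_smul, one_smul]
    _ = ‖u‖ - min ‖u‖ R := by rw [sub_mul, one_mul, hb_def, min_one_div_norm_mul_norm hR]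
    _ ≤ ‖u - s‖ := by
        rcases le_total ‖u‖ R with huR | huR
        · simp [min_eq_left huR]
        · rw [min_eq_right huR]
          linarith [norm_sub_norm_le u s]

end BallRetraction

section NormalTangential

variable {n : E}

lemma xn_sub (x y : E) : xn n (x - y) = xn n x - xn n y :=
  inner_sub_left x y n

lemma xt_sub (x y : E) : xt n (x - y) = xt n x - xt n y := by
  simp only [xt, inner_sub_left, sub_smul]
  abel

lemma inner_xt_eq_zero (hn : ‖n‖ = 1) (x : E) : ⟪xt n x, n⟫_ℝ = 0 := by
  rw [xt, inner_sub_left, real_inner_smul_left, real_inner_self_eq_norm_sq, hn]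
  ring

lemma xn_smul_add (hn : ‖n‖ = 1) (a : ℝ) {v : E} (hv : ⟪v, n⟫_ℝ = 0) :
    xn n (a • n + v) = a := by
  rw [xn, inner_add_left, real_inner_smul_left, real_inner_self_eq_norm_sq, hn, hv]
  ring

lemma xt_smul_add (hn : ‖n‖ = 1) (a : ℝ) {v : E} (hv : ⟪v, n⟫_ℝ = 0) :
    xt n (a • n + v) = v := by
  rw [xt, ← xn, xn_smul_add hn a hv]
  abel

lemma norm_sq_eq_xn_sq_add_norm_xt_sq (hn : ‖n‖ = 1) (x : E) :
    ‖x‖ ^ 2 = xn n x ^ 2 + ‖xt n x‖ ^ 2 := by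
  have hx : x = xn n x • n + xt n x := by simp only [xt, xn]; abel
  have horth : ⟪xn n x • n, xt n x⟫_ℝ = 0 := by
    rw [real_inner_smul_left, real_inner_comm, inner_xt_eq_zero hn, mul_zero]
  conv_lhs => rw [hx]
  rw [sq, sq, sq, norm_add_sq_eq_norm_sq_add_norm_sq_real horth, norm_smul, hn, mul_one,
    Real.norm_eq_abs, abs_mul_abs_self]

lemma norm_sub_sq_eq (hn : ‖n‖ = 1) (x y : E) :
    ‖x - y‖ ^ 2 = (xn n x - xn n y) ^ 2 + ‖xt n x - xt n y‖ ^ 2 := by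
  rw [norm_sq_eq_xn_sq_add_norm_xt_sq hn, xn_sub, xt_sub]

end NormalTangential

/-- Explicit orthogonal projection onto the half-cylinder
`C_R = {x : 0 ≤ x_n ∧ ‖x_t‖ ≤ R}` used in the augmented Lagrangian method. -/
theorem halfcylinder_projection (n : E) (hn : ‖n‖ = 1) (R : ℝ) (hR : 0 ≤ R) (τ : E) :
    (max 0 (xn n τ)) • n + (min 1 (R / ‖xt n τ‖)) • xt n τ
      ∈ {x : E | 0 ≤ xn n x ∧ ‖xt n x‖ ≤ R} ∧
    ∀ s ∈ {x : E | 0 ≤ xn n x ∧ ‖xt n x‖ ≤ R},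
      ‖τ - ((max 0 (xn n τ)) • n + (min 1 (R / ‖xt n τ‖)) • xt n τ)‖ ≤ ‖τ - s‖ := by
  set p := (max 0 (xn n τ)) • n + (min 1 (R / ‖xt n τ‖)) • xt n τ
  have hv : ⟪min 1 (R / ‖xt n τ‖) • xt n τ, n⟫_ℝ = 0 := by
    rw [real_inner_smul_left, inner_xt_eq_zero hn, mul_zero]
  have hpn : xn n p = max 0 (xn n τ) := xn_smul_add hn _ hv
  have hpt : xt n p = min 1 (R / ‖xt n τ‖) • xt n τ := xt_smul_add hn _ hv
  refine ⟨⟨hpn ▸ le_max_left _ _, hpt ▸ norm_min_one_div_norm_smul_le hR _⟩, ?_⟩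
  rintro s ⟨hsn, hst⟩
  have hnormal := sq_sub_max_zero_le (t := xn n τ) hsn
  have htangent := pow_le_pow_left₀ (norm_nonneg _)
    (norm_sub_min_one_div_norm_smul_le hR (xt n τ) hst) 2
  refine (pow_le_pow_iff_left₀ (norm_nonneg _) (norm_nonneg _) two_ne_zero).mp ?_
  rw [norm_sub_sq_eq hn, norm_sub_sq_eq hn τ s, hpn, hpt]
  exact add_le_add hnormal htangent
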